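/- A semi-binary phylogenetic network N is tree-based if and only if its bulged version B(N) admits a cherry cover. -/
import Mathlib


open Classical

structure MGraph (V A : Type) where
  tail : A → V
  head : A → V

namespace MGraph

variable {V A : Type} [Fintype V] [Fintype A] [DecidableEq V] [DecidableEq A]

variable (D : MGraph V A)

def indeg (v : V) : ℕ := Fintype.card {a : A // D.head a = v}
def outdeg (v : V) : ℕ := Fintype.card {a : A // D.tail a = v}

def IsRoot (v : V) : Prop := D.indeg v = 0 ∧ D.outdeg v = 1
def IsLeaf (v : V) : Prop := D.indeg v = 1 ∧ D.outdeg v = 0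
def IsTreeNode (v : V) : Prop := D.indeg v = 1 ∧ 2 ≤ D.outdeg v
def IsRetic (v : V) : Prop := 2 ≤ D.indeg v ∧ D.outdeg v = 1

def Acyclic : Prop := ∃ rank : V → ℕ, ∀ a : A, rank (D.tail a) < rank (D.head a)
def NoParallel : Prop := ∀ a b : A, D.tail a = D.tail b → D.head a = D.head b → a = b
def IsRootArc (e : A) : Prop := D.IsRoot (D.tail e)

/-- (non-binary) phylogenetic network -/
def IsPhylo : Prop :=
  D.Acyclic ∧ D.NoParallel ∧ (∃! v : V, D.IsRoot v) ∧
    ∀ v : V, D.IsRoot v ∨ D.IsLeaf v ∨ D.IsTreeNode v ∨ D.IsRetic v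

def IsSemiBinary : Prop := D.IsPhylo ∧ ∀ v : V, D.IsTreeNode v → D.outdeg v = 2
def IsBinary : Prop := D.IsSemiBinary ∧ ∀ v : V, D.IsRetic v → D.indeg v = 2

/-- A support tree: keep all non-reticulation arcs, exactly one incoming arc per
reticulation, and create no new leaves. -/
def IsSupportTree (S : Set A) : Prop :=
  (∀ a : A, ¬ D.IsRetic (D.head a) → a ∈ S) ∧
  (∀ v : V, D.IsRetic v → ∃! a : A, a ∈ S ∧ D.head a = v) ∧
  (∀ v : V, ¬ D.IsLeaf v → ∃ a ∈ S, D.tail a = v)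

def IsTreeBased : Prop := ∃ S : Set A, D.IsSupportTree S

def IsTreeChild : Prop :=
  ∀ v : V, ¬ D.IsLeaf v → ∃ e : A, D.tail e = v ∧ (D.IsTreeNode (D.head e) ∨ D.IsLeaf (D.head e))

/-- A cherry shape: two arcs with common tail and distinct heads. -/
def IsCherryShape (s : Finset A) : Prop :=
  ∃ a b : A, a ≠ b ∧ s = {a, b} ∧ D.tail a = D.tail b ∧ D.head a ≠ D.head b

/-- A reticulated cherry shape with designated middle arc `mid`; node-type
predicates `tn` (tree node) and `rt` (reticulation) are parameters so that the
definition also applies to the bulged version of a network. -/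
def IsRCShapeMid (tn rt : V → Prop) (s : Finset A) (mid : A) : Prop :=
  ∃ bot top : A, bot ≠ mid ∧ bot ≠ top ∧ mid ≠ top ∧ s = {bot, mid, top} ∧
    D.head mid = D.tail bot ∧ D.tail mid = D.tail top ∧ rt (D.tail bot) ∧ tn (D.tail mid)

def IsRCShape (tn rt : V → Prop) (s : Finset A) : Prop := ∃ mid : A, D.IsRCShapeMid tn rt s mid

/-- A cherry cover: every arc except root arcs lies in exactly one shape. -/
def IsCherryCoverG (tn rt : V → Prop) (isRoot : A → Prop) (P : Finset (Finset A)) : Prop :=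
  (∀ s ∈ P, D.IsCherryShape s ∨ D.IsRCShape tn rt s) ∧
  (∀ e : A, ¬ isRoot e → ∃! s : Finset A, s ∈ P ∧ e ∈ s) ∧
  (∀ s ∈ P, ∀ e ∈ s, ¬ isRoot e)

def IsCherryCover (P : Finset (Finset A)) : Prop :=
  D.IsCherryCoverG D.IsTreeNode D.IsRetic D.IsRootArc P

/-- `Q` covers exactly the arc set `T` with cherry and reticulated cherry shapes. -/
def CoversExactly (tn rt : V → Prop) (T : Set A) (Q : Finset (Finset A)) : Prop :=
  (∀ s ∈ Q, D.IsCherryShape s ∨ D.IsRCShape tn rt s) ∧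
  (∀ s ∈ Q, ∀ e ∈ s, e ∈ T) ∧ (∀ e ∈ T, ∃! s : Finset A, s ∈ Q ∧ e ∈ s)

/-- `Q` covers exactly the arc set `T` using only reticulated cherry shapes. -/
def CoversExactlyRC (tn rt : V → Prop) (T : Set A) (Q : Finset (Finset A)) : Prop :=
  (∀ s ∈ Q, D.IsRCShape tn rt s) ∧
  (∀ s ∈ Q, ∀ e ∈ s, e ∈ T) ∧ (∀ e ∈ T, ∃! s : Finset A, s ∈ Q ∧ e ∈ s)

/-- Multiplicity of an arc in the bulged version. -/
noncomputable def bulgeMult (a : A) : ℕ :=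
  if D.IsRetic (D.tail a) then D.indeg (D.tail a) - 1 else 1

/-- Arcs of the bulged version `B(N)`. -/
abbrev BArc : Type := Σ a : A, Fin (D.bulgeMult a)

def Bulged : MGraph V D.BArc := ⟨fun p => D.tail p.1, fun p => D.head p.1⟩

/-- A cherry cover of the bulged version, with node types taken from `N`. -/
def IsBulgedCherryCover (P : Finset (Finset D.BArc)) : Prop :=
  D.Bulged.IsCherryCoverG (fun v => D.IsTreeNode v) (fun v => D.IsRetic v)
    (fun e => D.IsRootArc e.1) P

/-- Isomorphism class of a bulged cherry cover: forget which parallel copy is used. -/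
noncomputable def coverClass (P : Finset (Finset D.BArc)) : Multiset (Finset A) :=
  P.val.map (fun s => s.image (fun e => e.1))

/-- Zig-zag trail: a nonempty sequence of distinct arcs alternately sharing heads
and tails. -/
def IsZZ (l : List A) : Prop :=
  l ≠ [] ∧ l.Nodup ∧
    (((∀ (i : ℕ) (x y : A), l[2*i]? = some x → l[2*i+1]? = some y → D.head x = D.head y) ∧
      (∀ (i : ℕ) (x y : A), l[2*i+1]? = some x → l[2*i+2]? = some y → D.tail x = D.tail y)) ∨
     ((∀ (i : ℕ) (x y : A), l[2*i]? = some x → l[2*i+1]? = some y → D.tail x = D.tail y) ∧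
      (∀ (i : ℕ) (x y : A), l[2*i+1]? = some x → l[2*i+2]? = some y → D.head x = D.head y)))

/-- Maximal zig-zag trail: not properly contained in another zig-zag trail. -/
def IsMaxZZ (l : List A) : Prop := D.IsZZ l ∧ ∀ l' : List A, D.IsZZ l' → l.Sublist l' → l' = l

/-- A fence decomposition, as a partition of the non-root arcs into arc sets of
maximal zig-zag trails. -/
def IsFenceDecomp (P : Set (Set A)) : Prop :=
  (∀ s ∈ P, ∃ l : List A, D.IsMaxZZ l ∧ {e : A | e ∈ l} = s) ∧
  (∀ s ∈ P, ∀ t ∈ P, s ≠ t → Disjoint s t) ∧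
  ⋃₀ P = {e : A | ¬ D.IsRootArc e}

/-- W-fence (binary definition). -/
def IsWFence (l : List A) : Prop :=
  D.IsMaxZZ l ∧ 2 ≤ l.length ∧ Even l.length ∧
  (∀ x, l.head? = some x → D.IsRetic (D.tail x)) ∧
  (∀ y, l.getLast? = some y → D.IsRetic (D.tail y))

/-- A (not necessarily maximal) crown: a closed zig-zag trail of even length ≥ 4. -/
def IsCrownCycle (l : List A) : Prop :=
  D.IsZZ l ∧ 4 ≤ l.length ∧ Even l.length ∧
  ∀ x y, l.head? = some x → l.getLast? = some y → (D.head x = D.head y ∨ D.tail x = D.tail y)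

def IsCrownTrail (l : List A) : Prop := D.IsMaxZZ l ∧ D.IsCrownCycle l

def ContainsCrown (l : List A) : Prop := ∃ m : List A, D.IsCrownCycle m ∧ m.IsInfix l

/-- M-fence: maximal zig-zag trail of even length, not a crown, all tails tree nodes. -/
def IsMFence (l : List A) : Prop :=
  D.IsMaxZZ l ∧ Even l.length ∧ ¬ D.IsCrownTrail l ∧ ∀ e ∈ l, D.IsTreeNode (D.tail e)

/-- W-fence (crown-free version, for non-binary networks). -/
def IsWFenceNC (l : List A) : Prop :=
  D.IsMaxZZ l ∧ Even l.length ∧ ¬ D.ContainsCrown l ∧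
  (∀ x, l.head? = some x → D.IsRetic (D.tail x)) ∧
  (∀ y, l.getLast? = some y → D.IsRetic (D.tail y))

/-- Lower W-crown. -/
def IsLowerWCrown (l : List A) : Prop :=
  D.IsZZ l ∧ ∃ p cr : List A, l = p ++ cr ∧ Odd p.length ∧ ¬ D.ContainsCrown p ∧
    D.IsCrownCycle cr ∧
    (∀ x y, p.getLast? = some x → cr.head? = some y → D.head x = D.head y) ∧
    (∀ x, p.head? = some x → D.IsRetic (D.tail x))

/-- Double-crown: two crowns joined by a crown-free trail. -/
def IsDoubleCrown (l : List A) : Prop :=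
  D.IsZZ l ∧ ∃ p q r : List A, l = p ++ q ++ r ∧ D.IsCrownCycle p ∧ D.IsCrownCycle r ∧
    ¬ D.ContainsCrown q

def ArcsOf (F : Set (List A)) : Set A := {e : A | ∃ l ∈ F, e ∈ l}

def Intersects (l1 l2 : List A) : Prop := ∃ e : A, e ∈ l1 ∧ e ∈ l2

/-- Extended zig-zag trail: a set of maximal zig-zag trails chain-connected by
pairwise intersection. -/
def IsExtZZ (F : Set (List A)) : Prop :=
  F.Nonempty ∧ (∀ l ∈ F, D.IsMaxZZ l) ∧
  ∀ l1 ∈ F, ∀ l2 ∈ F,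
    Relation.ReflTransGen (fun x y : List A => x ∈ F ∧ y ∈ F ∧ Intersects x y) l1 l2

def IsMaxExtZZ (F : Set (List A)) : Prop :=
  D.IsExtZZ F ∧ ∀ G : Set (List A), D.IsExtZZ G → F ⊆ G → G = F

def VertsOf (F : Set (List A)) : Set V :=
  {w : V | ∃ e ∈ ArcsOf F, D.tail e = w ∨ D.head e = w}

/-- The free endpoint of an extremal arc of a trail. -/
noncomputable def frontEnd (x : A) : V := if D.IsRetic (D.tail x) then D.tail x else D.head x

/-- Endpoints of a zig-zag trail. -/
def EndsSet (l : List A) : Set V :=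
  {w : V | (∃ x, l.head? = some x ∧ w = D.frontEnd x) ∨ (∃ y, l.getLast? = some y ∧ w = D.frontEnd y)}

/-- `s` is the arc set of a crown contained in (the arcs of) `F`. -/
def CrownIn (F : Set (List A)) (s : Set A) : Prop :=
  ∃ m : List A, D.IsCrownCycle m ∧ {e : A | e ∈ m} = s ∧ s ⊆ ArcsOf F

/-- Endpoints of an extended zig-zag trail (from its non-crown constituents). -/
def EndSetF (F : Set (List A)) : Set V :=
  {w : V | ∃ l ∈ F, ¬ D.ContainsCrown l ∧ w ∈ D.EndsSet l}

def NoCrownsIn (F : Set (List A)) : Prop := ¬ ∃ s : Set A, D.CrownIn F s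

def IsGenNFence (F : Set (List A)) : Prop :=
  D.IsMaxExtZZ F ∧ D.NoCrownsIn F ∧ ∃! u : V, u ∈ D.EndSetF F ∧ D.IsRetic u

def IsGenMFence (F : Set (List A)) : Prop :=
  D.IsMaxExtZZ F ∧ D.NoCrownsIn F ∧ ∀ w ∈ D.EndSetF F, D.IsTreeNode w

def IsGenCrown (F : Set (List A)) : Prop :=
  D.IsMaxExtZZ F ∧ (∃! s : Set A, D.CrownIn F s) ∧ ∀ w ∈ D.EndSetF F, D.IsTreeNode w

end MGraph

set_option linter.unusedSectionVars false

namespace MGraph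

variable {V A : Type} [Fintype V] [Fintype A] [DecidableEq V] [DecidableEq A]

variable (D : MGraph V A)

-- ###################### AUX START

lemma indeg_eq (v : V) :
    D.indeg v = (Finset.univ.filter fun a : A => D.head a = v).card := by
  rw [indeg, Fintype.card_subtype]

lemma outdeg_eq (v : V) :
    D.outdeg v = (Finset.univ.filter fun a : A => D.tail a = v).card := by
  rw [outdeg, Fintype.card_subtype]

lemma not_retic_of_tree {v : V} (h : D.IsTreeNode v) : ¬ D.IsRetic v := by
  intro h2; have := h.1; have := h2.1; omega

lemma not_root_of_tree {v : V} (h : D.IsTreeNode v) : ¬ D.IsRoot v := by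
  intro h2; have := h.1; have := h2.1; omega

lemma not_root_of_retic {v : V} (h : D.IsRetic v) : ¬ D.IsRoot v := by
  intro h2; have := h.1; have := h2.1; omega

lemma bulgeMult_pos (a : A) : 0 < D.bulgeMult a := by
  rw [bulgeMult]
  split
  · next h => have := h.1; omega
  · omega

lemma bulgeMult_of_tree {a : A} (h : D.IsTreeNode (D.tail a)) : D.bulgeMult a = 1 := by
  rw [bulgeMult, if_neg (D.not_retic_of_tree h)]

lemma bulgeMult_of_retic {a : A} (h : D.IsRetic (D.tail a)) :
    D.bulgeMult a = D.indeg (D.tail a) - 1 := by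
  rw [bulgeMult, if_pos h]

lemma barc_eq_of_fst {e f : D.BArc} (h1 : e.1 = f.1) (h : D.bulgeMult e.1 = 1) : e = f := by
  obtain ⟨a, i⟩ := e
  obtain ⟨b, j⟩ := f
  cases h1
  have hi := i.isLt
  have hj := j.isLt
  congr 1
  simp only at h
  apply Fin.ext
  omega

lemma out_unique {v : V} (hv : D.outdeg v = 1) {a b : A}
    (ha : D.tail a = v) (hb : D.tail b = v) : a = b := by
  obtain ⟨⟨x, hx⟩, hu⟩ := Fintype.card_eq_one_iff.mp hv
  have h1 := hu ⟨a, ha⟩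
  have h2 := hu ⟨b, hb⟩
  rw [Subtype.ext_iff] at h1 h2
  simp only at h1 h2
  rw [h1, h2]

lemma exists_out {v : V} (hv : 0 < D.outdeg v) : ∃ a : A, D.tail a = v := by
  rw [outdeg] at hv
  obtain ⟨⟨a, ha⟩⟩ := Fintype.card_pos_iff.mp hv
  exact ⟨a, ha⟩

lemma exists_two_out {v : V} (hv : D.outdeg v = 2) :
    ∃ a b : A, a ≠ b ∧ D.tail a = v ∧ D.tail b = v ∧
      ∀ c : A, D.tail c = v → c = a ∨ c = b := by
  rw [outdeg_eq] at hv
  obtain ⟨a, b, hab, hset⟩ := Finset.card_eq_two.mp hv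
  refine ⟨a, b, hab, ?_, ?_, ?_⟩
  · have : a ∈ Finset.univ.filter fun c : A => D.tail c = v := by
      rw [hset]; simp
    simpa using this
  · have : b ∈ Finset.univ.filter fun c : A => D.tail c = v := by
      rw [hset]; simp
    simpa using this
  · intro c hc
    have : c ∈ Finset.univ.filter fun x : A => D.tail x = v := by simp [hc]
    rw [hset] at this
    simpa using this

/-- The other out-arc at the tail of `a`. -/
noncomputable def otherArc (a : A) : A :=
  if h : ∃! b : A, D.tail b = D.tail a ∧ b ≠ a then h.choose else a

lemma otherArc_spec {a : A} (h2 : D.outdeg (D.tail a) = 2) :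
    D.tail (D.otherArc a) = D.tail a ∧ D.otherArc a ≠ a ∧
      ∀ c : A, D.tail c = D.tail a → c = a ∨ c = D.otherArc a := by
  obtain ⟨x, y, hxy, hx, hy, hall⟩ := D.exists_two_out h2
  have hex : ∃! b : A, D.tail b = D.tail a ∧ b ≠ a := by
    rcases hall a rfl with rfl | rfl
    · refine ⟨y, ⟨hy.trans hx.symm, Ne.symm hxy⟩, fun c hc => ?_⟩
      exact (hall c (hc.1.trans hx)).resolve_left hc.2
    · refine ⟨x, ⟨hx.trans hy.symm, hxy⟩, fun c hc => ?_⟩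
      exact (hall c (hc.1.trans hy)).resolve_right hc.2
  rw [otherArc, dif_pos hex]
  obtain ⟨h1, h2'⟩ := hex.choose_spec
  refine ⟨h1.1, h1.2, fun c hc => ?_⟩
  by_cases hca : c = a
  · exact Or.inl hca
  · exact Or.inr (hex.unique ⟨hc, hca⟩ h1)

lemma otherArc_otherArc {a : A} (h2 : D.outdeg (D.tail a) = 2) :
    D.otherArc (D.otherArc a) = a := by
  obtain ⟨ht, hne, hall⟩ := D.otherArc_spec h2
  have h2' : D.outdeg (D.tail (D.otherArc a)) = 2 := by rw [ht]; exact h2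
  obtain ⟨ht', hne', _⟩ := D.otherArc_spec h2'
  have := hall _ (ht'.trans ht)
  rcases this with h | h
  · exact h
  · exact absurd h hne'

-- ############ forward construction

variable (S : Set A)

noncomputable def remAt (u : V) : Finset A :=
  @Finset.filter A (fun x => D.head x = u ∧ x ∉ S) (Classical.decPred _) Finset.univ

lemma mem_remAt {u : V} {x : A} : x ∈ D.remAt S u ↔ D.head x = u ∧ x ∉ S := by
  rw [remAt]
  simp [Finset.filter_congr_decidable]

def barc (a : A) : D.BArc := ⟨a, ⟨0, D.bulgeMult_pos a⟩⟩

@[simp] lemma barc_fst (a : A) : (D.barc a).1 = a := rfl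

/-- The removed arc matched with a given copy of a reticulation edge. -/
noncomputable def midOf (c : D.BArc) : A :=
  if h : (D.remAt S (D.tail c.1)).card = D.bulgeMult c.1 then
    ((D.remAt S (D.tail c.1)).equivFin.symm (Fin.cast h.symm c.2) : A)
  else c.1

noncomputable def rcShape (c : D.BArc) : Finset D.BArc :=
  {c, D.barc (D.midOf S c), D.barc (D.otherArc (D.midOf S c))}

noncomputable def chShape (a : A) : Finset D.BArc := {D.barc a, D.barc (D.otherArc a)}

noncomputable def coverP : Finset (Finset D.BArc) :=
  ((@Finset.filter A (fun a => D.IsTreeNode (D.tail a) ∧ a ∈ S ∧ D.otherArc a ∈ S)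
      (Classical.decPred _) Finset.univ).image (D.chShape))
    ∪ ((@Finset.filter D.BArc (fun c => D.IsRetic (D.tail c.1))
      (Classical.decPred _) Finset.univ).image (D.rcShape S))

lemma mem_coverP {s : Finset D.BArc} :
    s ∈ D.coverP S ↔
      (∃ a : A, (D.IsTreeNode (D.tail a) ∧ a ∈ S ∧ D.otherArc a ∈ S) ∧ s = D.chShape a) ∨
      (∃ c : D.BArc, D.IsRetic (D.tail c.1) ∧ s = D.rcShape S c) := by
  rw [coverP, Finset.mem_union, Finset.mem_image, Finset.mem_image]
  constructor
  · rintro (⟨a, ha, rfl⟩ | ⟨c, hc, rfl⟩)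
    · simp only [Finset.filter_congr_decidable, Finset.mem_filter] at ha
      exact Or.inl ⟨a, ha.2, rfl⟩
    · simp only [Finset.filter_congr_decidable, Finset.mem_filter] at hc
      exact Or.inr ⟨c, hc.2, rfl⟩
  · rintro (⟨a, ha, rfl⟩ | ⟨c, hc, rfl⟩)
    · exact Or.inl ⟨a, by simp only [Finset.filter_congr_decidable, Finset.mem_filter]; exact ⟨Finset.mem_univ _, ha⟩, rfl⟩
    · exact Or.inr ⟨c, by simp only [Finset.filter_congr_decidable, Finset.mem_filter]; exact ⟨Finset.mem_univ _, hc⟩, rfl⟩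


lemma not_leaf_of_outdeg_pos {v : V} (h : 0 < D.outdeg v) : ¬ D.IsLeaf v := by
  intro hl; rw [hl.2] at h; omega

lemma removed_props (hsb : D.IsSemiBinary) (hS : D.IsSupportTree S) {m : A} (hm : m ∉ S) :
    D.IsRetic (D.head m) ∧ D.IsTreeNode (D.tail m) ∧ D.outdeg (D.tail m) = 2 ∧
      D.otherArc m ∈ S := by
  have hpos : 0 < D.outdeg (D.tail m) :=
    Fintype.card_pos_iff.mpr ⟨⟨m, rfl⟩⟩
  have h1 : D.IsRetic (D.head m) := by
    by_contra h
    exact hm (hS.1 m h)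
  have htree : D.IsTreeNode (D.tail m) := by
    rcases hsb.1.2.2.2 (D.tail m) with hr | hl | ht | hrt
    · obtain ⟨a, haS, hat⟩ := hS.2.2 (D.tail m) (D.not_leaf_of_outdeg_pos hpos)
      exact absurd ((D.out_unique hr.2 hat rfl) ▸ haS) hm
    · rw [hl.2] at hpos; omega
    · exact ht
    · obtain ⟨a, haS, hat⟩ := hS.2.2 (D.tail m) (D.not_leaf_of_outdeg_pos hpos)
      exact absurd ((D.out_unique hrt.2 hat rfl) ▸ haS) hm
  have h2 : D.outdeg (D.tail m) = 2 := hsb.2 _ htree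
  refine ⟨h1, htree, h2, ?_⟩
  obtain ⟨hot, hone, hall⟩ := D.otherArc_spec h2
  by_contra hoS
  obtain ⟨a, haS, hat⟩ := hS.2.2 (D.tail m) (D.not_leaf_of_outdeg_pos hpos)
  rcases hall a hat with rfl | rfl
  · exact hm haS
  · exact hoS haS

lemma remAt_card (hS : D.IsSupportTree S) {u : V} (hu : D.IsRetic u) :
    (D.remAt S u).card = D.indeg u - 1 := by
  obtain ⟨a₀, ⟨ha₀S, ha₀u⟩, huniq⟩ := hS.2.1 u hu
  have heq : D.remAt S u = (Finset.univ.filter fun x : A => D.head x = u).erase a₀ := by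
    ext x
    rw [D.mem_remAt, Finset.mem_erase, Finset.mem_filter]
    constructor
    · rintro ⟨hx, hxS⟩
      exact ⟨fun h => hxS (h ▸ ha₀S), Finset.mem_univ _, hx⟩
    · rintro ⟨hne, _, hx⟩
      exact ⟨hx, fun hxS => hne (huniq x ⟨hxS, hx⟩)⟩
  rw [heq, Finset.card_erase_of_mem
    (by rw [Finset.mem_filter]; exact ⟨Finset.mem_univ _, ha₀u⟩), ← indeg_eq]

lemma remAt_card_mult (hS : D.IsSupportTree S) {c : D.BArc} (hc : D.IsRetic (D.tail c.1)) :
    (D.remAt S (D.tail c.1)).card = D.bulgeMult c.1 := by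
  rw [D.remAt_card S hS hc, D.bulgeMult_of_retic hc]

lemma midOf_eq (hS : D.IsSupportTree S) {c : D.BArc} (hc : D.IsRetic (D.tail c.1)) :
    D.midOf S c = ((D.remAt S (D.tail c.1)).equivFin.symm
      (Fin.cast (D.remAt_card_mult S hS hc).symm c.2) : A) := by
  rw [midOf, dif_pos (D.remAt_card_mult S hS hc)]

lemma midOf_mem (hS : D.IsSupportTree S) {c : D.BArc} (hc : D.IsRetic (D.tail c.1)) :
    D.midOf S c ∈ D.remAt S (D.tail c.1) := by
  rw [D.midOf_eq S hS hc]
  exact ((D.remAt S (D.tail c.1)).equivFin.symm _).2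

lemma midOf_head (hS : D.IsSupportTree S) {c : D.BArc} (hc : D.IsRetic (D.tail c.1)) :
    D.head (D.midOf S c) = D.tail c.1 :=
  ((D.mem_remAt S).mp (D.midOf_mem S hS hc)).1

lemma midOf_notMem (hS : D.IsSupportTree S) {c : D.BArc} (hc : D.IsRetic (D.tail c.1)) :
    D.midOf S c ∉ S :=
  ((D.mem_remAt S).mp (D.midOf_mem S hS hc)).2

lemma midOf_inj (hS : D.IsSupportTree S) {c c' : D.BArc} (hc : D.IsRetic (D.tail c.1))
    (hc' : D.IsRetic (D.tail c'.1)) (h : D.midOf S c = D.midOf S c') : c = c' := by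
  have h1 := D.midOf_head S hS hc
  have h2 := D.midOf_head S hS hc'
  have hu : D.tail c'.1 = D.tail c.1 := by rw [← h1, ← h2, h]
  have hfst : c'.1 = c.1 := D.out_unique hc.2 hu rfl
  obtain ⟨a, i⟩ := c
  obtain ⟨a', i'⟩ := c'
  simp only at hfst
  subst hfst
  rw [D.midOf_eq S hS hc, D.midOf_eq S hS hc'] at h
  simp only at h
  have h3 := (D.remAt S (D.tail a')).equivFin.symm.injective (Subtype.coe_injective h)
  have h4 : (i : ℕ) = (i' : ℕ) := by
    have := congrArg Fin.val h3
    simpa using this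
  congr 1
  exact Fin.ext h4

lemma midOf_surj (hsb : D.IsSemiBinary) (hS : D.IsSupportTree S) {m : A} (hm : m ∉ S) :
    ∃ c : D.BArc, D.tail c.1 = D.head m ∧ D.midOf S c = m := by
  have hu : D.IsRetic (D.head m) := (D.removed_props S hsb hS hm).1
  obtain ⟨e, he⟩ := D.exists_out (by rw [hu.2]; omega)
  have hce : D.IsRetic (D.tail e) := by rw [he]; exact hu
  have hcard : (D.remAt S (D.tail e)).card = D.bulgeMult e :=
    D.remAt_card_mult S hS (c := ⟨e, ⟨0, D.bulgeMult_pos e⟩⟩) hce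
  have hmm : m ∈ D.remAt S (D.tail e) := by
    rw [D.mem_remAt]
    exact ⟨he.symm ▸ rfl, hm⟩
  refine ⟨⟨e, Fin.cast hcard ((D.remAt S (D.tail e)).equivFin ⟨m, hmm⟩)⟩, he, ?_⟩
  rw [D.midOf_eq S hS (c := ⟨e, _⟩) hce]
  have hfin : Fin.cast (D.remAt_card_mult S hS (c := ⟨e, Fin.cast hcard
        ((D.remAt S (D.tail e)).equivFin ⟨m, hmm⟩)⟩) hce).symm
      (Fin.cast hcard ((D.remAt S (D.tail e)).equivFin ⟨m, hmm⟩))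
      = (D.remAt S (D.tail e)).equivFin ⟨m, hmm⟩ := by
    apply Fin.ext
    simp
  rw [hfin, Equiv.symm_apply_apply]


lemma mem_chShape {e : D.BArc} {a : A} :
    e ∈ D.chShape a ↔ e = D.barc a ∨ e = D.barc (D.otherArc a) := by
  simp [chShape]

lemma mem_rcShape {e c : D.BArc} :
    e ∈ D.rcShape S c ↔ e = c ∨ e = D.barc (D.midOf S c) ∨
      e = D.barc (D.otherArc (D.midOf S c)) := by
  simp [rcShape]

lemma coverP_isCover (hsb : D.IsSemiBinary) (hS : D.IsSupportTree S) :
    D.IsBulgedCherryCover (D.coverP S) := by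
  have hnp : D.NoParallel := hsb.1.2.1
  -- basic facts we reuse
  have fst_of : ∀ {e : D.BArc} {x : A}, e = D.barc x → e.1 = x := by
    rintro e x rfl; rfl
  have tree_mult : ∀ {x : A}, D.IsTreeNode (D.tail x) → D.bulgeMult x = 1 :=
    fun hx => D.bulgeMult_of_tree hx
  refine ⟨?_, ?_, ?_⟩
  · -- each shape is a cherry or RC shape
    intro s hs
    rcases (D.mem_coverP S).mp hs with ⟨a, ⟨ht, haS, hoS⟩, rfl⟩ | ⟨c, hc, rfl⟩
    · left
      obtain ⟨hot, hone, _⟩ := D.otherArc_spec (hsb.2 _ ht)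
      refine ⟨D.barc a, D.barc (D.otherArc a), ?_, rfl, hot.symm, ?_⟩
      · intro h
        exact hone (fst_of h.symm)
      · intro h
        exact hone (hnp _ _ hot h.symm)
    · right
      set m := D.midOf S c with hmdef
      have hmS : m ∉ S := D.midOf_notMem S hS hc
      obtain ⟨hmh, hmt, hm2, hmo⟩ := D.removed_props S hsb hS hmS
      obtain ⟨hot, hone, _⟩ := D.otherArc_spec hm2
      have hhead : D.head m = D.tail c.1 := D.midOf_head S hS hc
      refine ⟨D.barc m, c, D.barc (D.otherArc m), ?_, ?_, ?_, rfl, hhead, hot.symm, hc, hmt⟩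
      · intro h
        have := fst_of h
        rw [this] at hc
        exact D.not_retic_of_tree hmt hc
      · intro h
        have : c.1 = D.otherArc m := congrArg Sigma.fst h
        rw [this, hot] at hc
        exact D.not_retic_of_tree hmt hc
      · intro h
        have : m = D.otherArc m := by
          have := congrArg Sigma.fst h; simpa using this
        exact hone this.symm
  · -- each non-root arc in exactly one shape
    intro e he
    simp only at he
    rcases hsb.1.2.2.2 (D.tail e.1) with hr | hl | ht | hrt
    · exact absurd hr he
    · have hpos : 0 < D.outdeg (D.tail e.1) := Fintype.card_pos_iff.mpr ⟨⟨e.1, rfl⟩⟩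
      rw [hl.2] at hpos; omega
    · -- tree node tail
      have he1 : e = D.barc e.1 := D.barc_eq_of_fst rfl (tree_mult ht)
      set a := e.1 with hadef
      have h2 : D.outdeg (D.tail a) = 2 := hsb.2 _ ht
      obtain ⟨hot, hone, hall⟩ := D.otherArc_spec h2
      by_cases haS : a ∈ S
      · by_cases hoS : D.otherArc a ∈ S
        · -- both in S : cherry at the tail of a
          refine ⟨D.chShape a, ⟨(D.mem_coverP S).mpr (Or.inl ⟨a, ⟨ht, haS, hoS⟩, rfl⟩),
            (D.mem_chShape).mpr (Or.inl he1)⟩, ?_⟩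
          rintro s ⟨hs, hes⟩
          rcases (D.mem_coverP S).mp hs with ⟨a', ⟨ht', haS', hoS'⟩, rfl⟩ | ⟨c', hc', rfl⟩
          · rcases (D.mem_chShape).mp hes with h | h
            · rw [hadef.trans (fst_of h)]
            · have haa : a = D.otherArc a' := hadef.trans (fst_of h)
              have h2' : D.outdeg (D.tail a') = 2 := hsb.2 _ ht'
              have : D.otherArc a = a' := by rw [haa, D.otherArc_otherArc h2']
              rw [chShape, chShape, haa, D.otherArc_otherArc h2', Finset.pair_comm]
          · exfalso
            rcases (D.mem_rcShape S).mp hes with h | h | h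
            · rw [← h] at hc'
              exact D.not_retic_of_tree ht hc'
            · have : a = D.midOf S c' := hadef.trans (fst_of h)
              exact (D.midOf_notMem S hS hc') (this ▸ haS)
            · have haa : a = D.otherArc (D.midOf S c') := hadef.trans (fst_of h)
              have hmS' : D.midOf S c' ∉ S := D.midOf_notMem S hS hc'
              have hm2' : D.outdeg (D.tail (D.midOf S c')) = 2 :=
                (D.removed_props S hsb hS hmS').2.2.1
              have : D.otherArc a = D.midOf S c' := by
                rw [haa, D.otherArc_otherArc hm2']
              exact hmS' (this ▸ hoS)
        · -- a ∈ S, otherArc a ∉ S : e is the top of the shape keyed by the copy of other a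
          obtain ⟨c₀, hc₀t, hc₀m⟩ := D.midOf_surj S hsb hS hoS
          have hc₀ : D.IsRetic (D.tail c₀.1) := by
            rw [hc₀t]
            exact (D.removed_props S hsb hS hoS).1
          have htop : e = D.barc (D.otherArc (D.midOf S c₀)) := by
            rw [hc₀m, D.otherArc_otherArc h2, ← he1]
          refine ⟨D.rcShape S c₀, ⟨(D.mem_coverP S).mpr (Or.inr ⟨c₀, hc₀, rfl⟩),
            (D.mem_rcShape S).mpr (Or.inr (Or.inr htop))⟩, ?_⟩
          rintro s ⟨hs, hes⟩
          rcases (D.mem_coverP S).mp hs with ⟨a', ⟨ht', haS', hoS'⟩, rfl⟩ | ⟨c', hc', rfl⟩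
          · exfalso
            rcases (D.mem_chShape).mp hes with h | h
            · have : a = a' := hadef.trans (fst_of h)
              exact hoS (this ▸ hoS')
            · have haa : a = D.otherArc a' := hadef.trans (fst_of h)
              have h2' : D.outdeg (D.tail a') = 2 := hsb.2 _ ht'
              have : D.otherArc a = a' := by rw [haa, D.otherArc_otherArc h2']
              exact hoS (this ▸ haS')
          · rcases (D.mem_rcShape S).mp hes with h | h | h
            · exfalso
              rw [← h] at hc'
              exact D.not_retic_of_tree ht hc'
            · exfalso
              have : a = D.midOf S c' := hadef.trans (fst_of h)
              exact (D.midOf_notMem S hS hc') (this ▸ haS)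
            · have haa : a = D.otherArc (D.midOf S c') := hadef.trans (fst_of h)
              have hmS' : D.midOf S c' ∉ S := D.midOf_notMem S hS hc'
              have hm2' : D.outdeg (D.tail (D.midOf S c')) = 2 :=
                (D.removed_props S hsb hS hmS').2.2.1
              have hmm : D.midOf S c' = D.otherArc a := by
                rw [haa, D.otherArc_otherArc hm2']
              have : c' = c₀ := D.midOf_inj S hS hc' hc₀ (by rw [hmm, hc₀m])
              rw [this]
      · -- a ∉ S : e is the middle of the shape keyed by its matched copy
        obtain ⟨c₀, hc₀t, hc₀m⟩ := D.midOf_surj S hsb hS haS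
        have hc₀ : D.IsRetic (D.tail c₀.1) := by
          rw [hc₀t]
          exact (D.removed_props S hsb hS haS).1
        have hmid : e = D.barc (D.midOf S c₀) := by rw [hc₀m, ← he1]
        refine ⟨D.rcShape S c₀, ⟨(D.mem_coverP S).mpr (Or.inr ⟨c₀, hc₀, rfl⟩),
          (D.mem_rcShape S).mpr (Or.inr (Or.inl hmid))⟩, ?_⟩
        rintro s ⟨hs, hes⟩
        rcases (D.mem_coverP S).mp hs with ⟨a', ⟨ht', haS', hoS'⟩, rfl⟩ | ⟨c', hc', rfl⟩
        · exfalso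
          rcases (D.mem_chShape).mp hes with h | h
          · have : a = a' := hadef.trans (fst_of h)
            exact haS (this ▸ haS')
          · have : a = D.otherArc a' := hadef.trans (fst_of h)
            exact haS (this ▸ hoS')
        · rcases (D.mem_rcShape S).mp hes with h | h | h
          · exfalso
            rw [← h] at hc'
            exact D.not_retic_of_tree ht hc'
          · have : D.midOf S c' = a := (hadef.trans (fst_of h)).symm
            have : c' = c₀ := D.midOf_inj S hS hc' hc₀ (by rw [this, hc₀m])
            rw [this]
          · exfalso
            have haa : a = D.otherArc (D.midOf S c') := hadef.trans (fst_of h)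
            have hmS' : D.midOf S c' ∉ S := D.midOf_notMem S hS hc'
            have hmo' : D.otherArc (D.midOf S c') ∈ S :=
              (D.removed_props S hsb hS hmS').2.2.2
            exact haS (haa ▸ hmo')
    · -- retic tail : e is a copy, key of its own shape
      refine ⟨D.rcShape S e, ⟨(D.mem_coverP S).mpr (Or.inr ⟨e, hrt, rfl⟩),
        (D.mem_rcShape S).mpr (Or.inl rfl)⟩, ?_⟩
      rintro s ⟨hs, hes⟩
      rcases (D.mem_coverP S).mp hs with ⟨a', ⟨ht', haS', hoS'⟩, rfl⟩ | ⟨c', hc', rfl⟩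
      · exfalso
        rcases (D.mem_chShape).mp hes with h | h
        · have : e.1 = a' := fst_of h
          rw [this] at hrt
          exact D.not_retic_of_tree ht' hrt
        · have : e.1 = D.otherArc a' := fst_of h
          have h2' : D.outdeg (D.tail a') = 2 := hsb.2 _ ht'
          obtain ⟨hot', _, _⟩ := D.otherArc_spec h2'
          rw [this, hot'] at hrt
          exact D.not_retic_of_tree ht' hrt
      · rcases (D.mem_rcShape S).mp hes with h | h | h
        · rw [h]
        · exfalso
          have : e.1 = D.midOf S c' := fst_of h
          have hmS' : D.midOf S c' ∉ S := D.midOf_notMem S hS hc'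
          have hmt' := (D.removed_props S hsb hS hmS').2.1
          rw [this] at hrt
          exact D.not_retic_of_tree hmt' hrt
        · exfalso
          have : e.1 = D.otherArc (D.midOf S c') := fst_of h
          have hmS' : D.midOf S c' ∉ S := D.midOf_notMem S hS hc'
          obtain ⟨_, hmt', hm2', _⟩ := D.removed_props S hsb hS hmS'
          obtain ⟨hot', _, _⟩ := D.otherArc_spec hm2'
          rw [this, hot'] at hrt
          exact D.not_retic_of_tree hmt' hrt
  · -- no root arcs in shapes
    intro s hs e hes
    simp only
    rcases (D.mem_coverP S).mp hs with ⟨a, ⟨ht, haS, hoS⟩, rfl⟩ | ⟨c, hc, rfl⟩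
    · rcases (D.mem_chShape).mp hes with h | h
      · rw [h]
        exact fun hr => D.not_root_of_tree ht hr
      · rw [h]
        obtain ⟨hot, _, _⟩ := D.otherArc_spec (hsb.2 _ ht)
        intro hr
        rw [IsRootArc, barc_fst, hot] at hr
        exact D.not_root_of_tree ht hr
    · have hmS : D.midOf S c ∉ S := D.midOf_notMem S hS hc
      obtain ⟨_, hmt, hm2, _⟩ := D.removed_props S hsb hS hmS
      obtain ⟨hot, _, _⟩ := D.otherArc_spec hm2
      rcases (D.mem_rcShape S).mp hes with h | h | h
      · rw [h]
        exact fun hr => D.not_root_of_retic hc hr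
      · rw [h]
        exact fun hr => D.not_root_of_tree hmt hr
      · rw [h]
        intro hr
        rw [IsRootArc, barc_fst, hot] at hr
        exact D.not_root_of_tree hmt hr


-- ############ backward direction

lemma snd_eq_of_mk_eq {a : A} {i j : Fin (D.bulgeMult a)}
    (h : (⟨a, i⟩ : D.BArc) = ⟨a, j⟩) : i = j := by
  have := (Sigma.mk.inj_iff.mp h).2
  exact eq_of_heq this

lemma rc_parts {s : Finset D.BArc} {mid : D.BArc}
    (h : D.Bulged.IsRCShapeMid (fun v => D.IsTreeNode v) (fun v => D.IsRetic v) s mid) :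
    ∃ bot top : D.BArc, bot ≠ mid ∧ bot ≠ top ∧ mid ≠ top ∧ s = {bot, mid, top} ∧
      D.head mid.1 = D.tail bot.1 ∧ D.tail mid.1 = D.tail top.1 ∧
      D.IsRetic (D.tail bot.1) ∧ D.IsTreeNode (D.tail mid.1) ∧ mid ∈ s ∧
      (∀ e ∈ s, D.IsRetic (D.tail e.1) → e = bot) := by
  obtain ⟨bot, top, h1, h2, h3, h4, h5, h6, h7, h8⟩ := h
  refine ⟨bot, top, h1, h2, h3, h4, h5, h6, h7, h8, ?_, ?_⟩
  · rw [h4]; simp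
  · intro e hes her
    rw [h4, Finset.mem_insert, Finset.mem_insert, Finset.mem_singleton] at hes
    rcases hes with rfl | rfl | rfl
    · rfl
    · exact absurd her (D.not_retic_of_tree h8)
    · exfalso
      have h6' : D.tail mid.1 = D.tail e.1 := h6
      rw [← h6'] at her
      exact D.not_retic_of_tree h8 her

lemma rc_mid_unique (hnp : D.NoParallel) {s : Finset D.BArc} {m1 m2 : D.BArc}
    (h1 : D.Bulged.IsRCShapeMid (fun v => D.IsTreeNode v) (fun v => D.IsRetic v) s m1)
    (h2 : D.Bulged.IsRCShapeMid (fun v => D.IsTreeNode v) (fun v => D.IsRetic v) s m2) :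
    m1 = m2 := by
  obtain ⟨b1, t1, pa1, pa2, pa3, pa4, pa5, pa6, pa7, pa8, pam, pacl⟩ := D.rc_parts h1
  obtain ⟨b2, t2, pb1, pb2, pb3, pb4, pb5, pb6, pb7, pb8, pbm, pbcl⟩ := D.rc_parts h2
  have hm2s : m2 ∈ s := pbm
  rw [pa4, Finset.mem_insert, Finset.mem_insert, Finset.mem_singleton] at hm2s
  rcases hm2s with rfl | h | rfl
  · exact absurd pa7 (D.not_retic_of_tree pb8)
  · exact h.symm
  · -- m2 = t1 : derive a contradiction
    exfalso
    have hb2s : b2 ∈ s := by rw [pb4]; simp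
    have hb2 : b2 = b1 := pacl b2 hb2s pb7
    have hheads : D.head m1.1 = D.head m2.1 := by
      rw [pa5, pb5, hb2]
    have htails : D.tail m1.1 = D.tail m2.1 := pa6
    have hfst : m1.1 = m2.1 := hnp _ _ htails hheads
    have : m1 = m2 := D.barc_eq_of_fst hfst (D.bulgeMult_of_tree pa8)
    exact pa3 this
  
lemma retic_shape_rc {P : Finset (Finset D.BArc)} (hP : D.IsBulgedCherryCover P)
    {s : Finset D.BArc} (hs : s ∈ P) {e : D.BArc} (hes : e ∈ s)
    (her : D.IsRetic (D.tail e.1)) :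
    ∃ mid : D.BArc,
      D.Bulged.IsRCShapeMid (fun v => D.IsTreeNode v) (fun v => D.IsRetic v) s mid := by
  rcases hP.1 s hs with ⟨x, y, hxy, hset, htl, hhd⟩ | h
  · exfalso
    have htl' : D.tail x.1 = D.tail y.1 := htl
    have hx : D.tail x.1 = D.tail e.1 ∧ D.tail y.1 = D.tail e.1 := by
      rw [hset, Finset.mem_insert, Finset.mem_singleton] at hes
      rcases hes with rfl | rfl
      · exact ⟨rfl, htl'.symm⟩
      · exact ⟨htl', rfl⟩
    have : x.1 = y.1 := D.out_unique her.2 hx.1 hx.2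
    exact hhd (show D.head x.1 = D.head y.1 by rw [this])
  · exact h

def usedAsMid (P : Finset (Finset D.BArc)) (a : A) : Prop :=
  ∃ s ∈ P, ∃ i : Fin (D.bulgeMult a),
    D.Bulged.IsRCShapeMid (fun v => D.IsTreeNode v) (fun v => D.IsRetic v) s ⟨a, i⟩

lemma usedAsMid_iff (P : Finset (Finset D.BArc)) (a : A) :
    D.usedAsMid P a ↔ ∃ s ∈ P, ∃ i : Fin (D.bulgeMult a),
      D.Bulged.IsRCShapeMid (fun v => D.IsTreeNode v) (fun v => D.IsRetic v) s ⟨a, i⟩ :=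
  Iff.rfl

lemma cover_to_support (hsb : D.IsSemiBinary) {P : Finset (Finset D.BArc)}
    (hP : D.IsBulgedCherryCover P) :
    D.IsSupportTree {a : A | ¬ D.usedAsMid P a} := by
  have hnp : D.NoParallel := hsb.1.2.1
  have hc1 := hP.1
  have hc2 := hP.2.1
  have hc3 := hP.2.2
  -- two sibling arcs out of a vertex cannot both be used as middles
  have not_both : ∀ a b : A, a ≠ b → D.tail b = D.tail a →
      (∀ c : A, D.tail c = D.tail a → c = a ∨ c = b) →
      ¬ (D.usedAsMid P a ∧ D.usedAsMid P b) := by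
    rintro a b hab htl hall ⟨⟨sa, hsa, ia, hma⟩, ⟨sb, hsb', ib, hmb⟩⟩
    obtain ⟨ba, ta, a1, a2, a3, a4, a5, a6, a7, a8, am, acl⟩ := D.rc_parts hma
    obtain ⟨bb, tb, b1, b2, b3, b4, b5, b6, b7, b8, bm, bcl⟩ := D.rc_parts hmb
    have hmua : D.bulgeMult a = 1 := D.bulgeMult_of_tree a8
    have hta : ta.1 = b := by
      have ha6 : D.tail a = D.tail ta.1 := a6
      rcases hall ta.1 ha6.symm with h | h
      · exfalso
        exact a3 (D.barc_eq_of_fst h (by rw [h]; exact hmua)).symm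
      · exact h
    have htb : tb.1 = a := by
      have hb6 : D.tail b = D.tail tb.1 := b6
      have : D.tail tb.1 = D.tail a := by rw [← hb6, htl]
      rcases hall tb.1 this with h | h
      · exact h
      · exfalso
        have hmub : D.bulgeMult b = 1 := D.bulgeMult_of_tree (htl ▸ a8)
        exact b3 (D.barc_eq_of_fst h (by rw [h]; exact hmub)).symm
    have htbm : tb = (⟨a, ia⟩ : D.BArc) := D.barc_eq_of_fst htb (by rw [htb]; exact hmua)
    have htbs : tb ∈ sb := by rw [b4]; simp
    have hnr : ¬ (fun e : D.BArc => D.IsRootArc e.1) (⟨a, ia⟩ : D.BArc) := by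
      exact hc3 sa hsa _ am
    have hss : sa = sb := by
      have h1 := hc2 (⟨a, ia⟩ : D.BArc) hnr
      exact h1.unique ⟨hsa, am⟩ ⟨hsb', htbm ▸ htbs⟩
    rw [← hss] at hmb
    have := D.rc_mid_unique hnp hma hmb
    exact hab (congrArg Sigma.fst this)
  refine ⟨?_, ?_, ?_⟩
  · -- arcs with non-reticulate head are kept
    intro a hna
    intro h
    obtain ⟨s, hs, i, hmid⟩ := h
    obtain ⟨bot, top, p1, p2, p3, p4, p5, p6, p7, p8, pm, pcl⟩ := D.rc_parts hmid
    have hp5 : D.head a = D.tail bot.1 := p5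
    rw [← hp5] at p7
    exact hna p7
  · -- exactly one incoming arc per reticulation is kept
    intro v hv
    obtain ⟨ev, hev⟩ := D.exists_out (v := v) (by rw [hv.2]; omega)
    have hevr : D.IsRetic (D.tail ev) := by rw [hev]; exact hv
    have hmult : D.bulgeMult ev = D.indeg v - 1 := by
      rw [D.bulgeMult_of_retic hevr, hev]
    have copy_mid : ∀ i : Fin (D.bulgeMult ev), ∃ (s : Finset D.BArc) (mid : D.BArc),
        s ∈ P ∧ (⟨ev, i⟩ : D.BArc) ∈ s ∧
        D.Bulged.IsRCShapeMid (fun v => D.IsTreeNode v) (fun v => D.IsRetic v) s mid ∧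
        D.head mid.1 = v ∧ D.IsTreeNode (D.tail mid.1) ∧
        (∀ e ∈ s, D.IsRetic (D.tail e.1) → e = (⟨ev, i⟩ : D.BArc)) := by
      intro i
      have hnr : ¬ (fun e : D.BArc => D.IsRootArc e.1) (⟨ev, i⟩ : D.BArc) :=
        fun hr => D.not_root_of_retic hevr hr
      obtain ⟨s, ⟨hs, hmem⟩, _⟩ := hc2 _ hnr
      obtain ⟨mid, hmid⟩ := D.retic_shape_rc hP hs hmem hevr
      obtain ⟨bot, top, p1, p2, p3, p4, p5, p6, p7, p8, pm, pcl⟩ := D.rc_parts hmid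
      have hbot : (⟨ev, i⟩ : D.BArc) = bot := pcl _ hmem hevr
      refine ⟨s, mid, hs, hmem, hmid, ?_, p8, ?_⟩
      · rw [p5, ← hbot]
        exact hev
      · intro e hes her
        exact (pcl e hes her).trans hbot.symm
    choose sF midF hsF hmemF hmidF hheadF htnF hclF using copy_mid
    have sF_eq : ∀ (i : Fin (D.bulgeMult ev)) (s : Finset D.BArc), s ∈ P →
        (⟨ev, i⟩ : D.BArc) ∈ s → sF i = s := by
      intro i s hs hmem
      have hnr : ¬ (fun e : D.BArc => D.IsRootArc e.1) (⟨ev, i⟩ : D.BArc) :=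
        fun hr => D.not_root_of_retic hevr hr
      exact (hc2 _ hnr).unique ⟨hsF i, hmemF i⟩ ⟨hs, hmem⟩
    set M : Finset A := Finset.univ.filter (fun a => D.head a = v ∧ D.usedAsMid P a)
      with hM
    set I : Finset A := Finset.univ.filter (fun a => D.head a = v) with hI
    have memM : ∀ a : A, a ∈ M ↔ D.head a = v ∧ D.usedAsMid P a := by
      intro a; rw [hM, Finset.mem_filter]; simp
    have memI : ∀ a : A, a ∈ I ↔ D.head a = v := by
      intro a; rw [hI, Finset.mem_filter]; simp
    have hMI : M ⊆ I := by
      intro a ha; exact (memI a).mpr ((memM a).mp ha).1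
    have hMcard : M.card = D.bulgeMult ev := by
      apply Finset.card_eq_of_bijective (fun i h => (midF ⟨i, h⟩).1)
      · -- surjective
        intro a ha
        obtain ⟨hav, s, hs, x, hmid⟩ := (memM a).mp ha
        obtain ⟨bot, top, p1, p2, p3, p4, p5, p6, p7, p8, pm, pcl⟩ := D.rc_parts hmid
        have hbv : D.tail bot.1 = v := by
          have hp5 : D.head a = D.tail bot.1 := p5
          rw [← hp5, hav]
        have hbfst : bot.1 = ev := D.out_unique hv.2 hbv hev
        obtain ⟨b1, b2⟩ := bot
        simp only at hbfst
        subst hbfst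
        refine ⟨(b2 : ℕ), b2.isLt, ?_⟩
        have hbots : (⟨b1, b2⟩ : D.BArc) ∈ s := by rw [p4]; simp
        have hseq : sF ⟨(b2 : ℕ), b2.isLt⟩ = s := by
          rw [Fin.eta]
          exact sF_eq b2 s hs hbots
        have hmm := D.rc_mid_unique hnp (hmidF ⟨(b2 : ℕ), b2.isLt⟩) (hseq ▸ hmid)
        rw [hmm]
      · -- maps into M
        intro i h
        refine (memM _).mpr ⟨hheadF ⟨i, h⟩, sF ⟨i, h⟩, hsF ⟨i, h⟩, (midF ⟨i, h⟩).2, ?_⟩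
        exact hmidF ⟨i, h⟩
      · -- injective
        intro i j hi hj hij
        have hmult1 : D.bulgeMult (midF ⟨i, hi⟩).1 = 1 := D.bulgeMult_of_tree (htnF _)
        have hmeq : midF ⟨i, hi⟩ = midF ⟨j, hj⟩ := D.barc_eq_of_fst hij hmult1
        have hnr : ¬ (fun e : D.BArc => D.IsRootArc e.1) (midF ⟨i, hi⟩) := by
          obtain ⟨bot, top, p1, p2, p3, p4, p5, p6, p7, p8, pm, pcl⟩ :=
            D.rc_parts (hmidF ⟨i, hi⟩)
          exact hc3 _ (hsF _) _ pm
        have hss : sF ⟨i, hi⟩ = sF ⟨j, hj⟩ := by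
          obtain ⟨bi, ti, q1, q2, q3, q4, q5, q6, q7, q8, qm, qcl⟩ :=
            D.rc_parts (hmidF ⟨i, hi⟩)
          obtain ⟨bj, tj, r1, r2, r3, r4, r5, r6, r7, r8, rm, rcl⟩ :=
            D.rc_parts (hmidF ⟨j, hj⟩)
          exact (hc2 _ hnr).unique ⟨hsF _, qm⟩ ⟨hsF _, hmeq ▸ rm⟩
        have hcopy : (⟨ev, ⟨j, hj⟩⟩ : D.BArc) = (⟨ev, ⟨i, hi⟩⟩ : D.BArc) := by
          apply hclF ⟨i, hi⟩
          · rw [hss]; exact hmemF ⟨j, hj⟩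
          · exact hevr
        have := D.snd_eq_of_mk_eq hcopy
        have : (⟨j, hj⟩ : Fin (D.bulgeMult ev)) = ⟨i, hi⟩ := this
        simpa using congrArg Fin.val this.symm
    have hIcard : I.card = D.indeg v := by
      rw [hI, ← indeg_eq]
    have hone : (I \ M).card = 1 := by
      rw [Finset.card_sdiff_of_subset hMI, hIcard, hMcard, hmult]
      have := hv.1
      omega
    obtain ⟨a₀, ha₀⟩ := Finset.card_eq_one.mp hone
    have hmem₀ : a₀ ∈ I \ M := by rw [ha₀]; simp
    rw [Finset.mem_sdiff] at hmem₀
    refine ⟨a₀, ⟨?_, (memI a₀).mp hmem₀.1⟩, ?_⟩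
    · intro hu
      exact hmem₀.2 ((memM a₀).mpr ⟨(memI a₀).mp hmem₀.1, hu⟩)
    · rintro y ⟨hyS, hyv⟩
      have : y ∈ I \ M := by
        rw [Finset.mem_sdiff]
        exact ⟨(memI y).mpr hyv, fun hyM => hyS ((memM y).mp hyM).2⟩
      rw [ha₀, Finset.mem_singleton] at this
      exact this
  · -- no vertex loses all its outgoing arcs
    intro v hv
    rcases hsb.1.2.2.2 v with hr | hl | ht | hrt
    · obtain ⟨a, ha⟩ := D.exists_out (v := v) (by rw [hr.2]; omega)
      refine ⟨a, ?_, ha⟩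
      intro h
      obtain ⟨s, hs, i, hmid⟩ := h
      obtain ⟨bot, top, p1, p2, p3, p4, p5, p6, p7, p8, pm, pcl⟩ := D.rc_parts hmid
      have hp8 : D.IsTreeNode (D.tail a) := p8
      rw [ha] at hp8
      exact D.not_root_of_tree hp8 hr
    · exact absurd hl hv
    · obtain ⟨a, b, hab, hta, htb, hall⟩ := D.exists_two_out (hsb.2 v ht)
      have hkey := not_both a b hab (by rw [hta, htb])
        (fun c hc => hall c (by rw [← hta]; exact hc))
      rcases not_and_or.mp hkey with h | h
      · exact ⟨a, h, hta⟩
      · exact ⟨b, h, htb⟩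
    · obtain ⟨a, ha⟩ := D.exists_out (v := v) (by rw [hrt.2]; omega)
      refine ⟨a, ?_, ha⟩
      intro h
      obtain ⟨s, hs, i, hmid⟩ := h
      obtain ⟨bot, top, p1, p2, p3, p4, p5, p6, p7, p8, pm, pcl⟩ := D.rc_parts hmid
      have hp8 : D.IsTreeNode (D.tail a) := p8
      rw [ha] at hp8
      exact D.not_retic_of_tree hp8 hrt


end MGraph

/-- A semi-binary network is tree-based iff its bulged version has a
cherry cover. -/
theorem stmt1 {V A : Type} [Fintype V] [Fintype A] [DecidableEq V] [DecidableEq A]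
    (D : MGraph V A) (hsb : D.IsSemiBinary) :
    D.IsTreeBased ↔ ∃ P : Finset (Finset D.BArc), D.IsBulgedCherryCover P := by
  constructor
  · rintro ⟨S, hS⟩
    exact ⟨D.coverP S, D.coverP_isCover S hsb hS⟩
  · rintro ⟨P, hP⟩
    exact ⟨_, D.cover_to_support hsb hP⟩
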